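/- Let A be a weakly idempotent complete exact category with enough projectives and injectives, and let (X, X^⊥) be a complete hereditary cotorsion pair in A. Then for any object M of A and any integer n ≥ 0 the following are equivalent: (1) the X-projective dimension of M is at most n; (2) there is an acyclic sequence X_n ↣ X_{n−1} → ⋯ → X_1 → X_0 ↠ M with each X_i in X; (3) for any acyclic sequence K ↣ X_{n−1} → ⋯ → X_1 → X_0 ↠ M with each X_i in X, the object K lies in X; (4) Ext^{n+i}_A(M, Y) = 0 for all Y ∈ X^⊥ and all i ≥ 1. -/

import Mathlib

/-!
Everything rests on dimension shifting: if `K ↣ B ↠ M` is a conflation with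
`Extⁱ(B, Y) = 0` for all `i ≥ 1`, then `Extʲ⁺¹(K, Y) = 0 ↔ Extʲ⁺²(M, Y) = 0`. Since `Ext` is
defined through projective presentations, this is proved together with the invariance
`Extʲ⁺¹(D, Y) = 0 ↔ Extʲ⁺¹(L, Y) = 0` for `L ↣ D ↠ B`, by induction on `j`, comparing
presentations through pullbacks. Heredity makes every object of `X` orthogonal to `X^⊥` in all
positive degrees, so along a resolution `K ↣ X_{n-1} → ⋯ → X_0 ↠ M` by objects of `X` we get
`Extʲ⁺¹(K, Y) = 0 ↔ Extⁿ⁺ʲ⁺¹(M, Y) = 0` for `Y ∈ X^⊥`. With `X = ⊥(X^⊥)` this gives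
(1) ⇒ (4) ⇒ (3), and completeness supplies the resolution needed for (3) ⇒ (2).
-/

open CategoryTheory CategoryTheory.Limits

universe w v u v₁ u₁ v₂ u₂ v₃ u₃

namespace CotorsionPaper

variable {A : Type u} [Category.{v} A] [Preadditive A]

/-- The data of an exact structure on an additive category: a distinguished class of
kernel-cokernel pairs, called conflations. -/
structure ExactStruct (A : Type u) [Category.{v} A] [Preadditive A] where
  /-- `IsConflation f g` means that `X ↣ Y ↠ Z` (via `f`, `g`) is a conflation. -/
  IsConflation : ∀ ⦃X Y Z : A⦄, (X ⟶ Y) → (Y ⟶ Z) → Prop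

namespace ExactStruct

variable (E : ExactStruct A)

/-- A morphism is an inflation if it is the first map of some conflation. -/
def Inflation {X Y : A} (f : X ⟶ Y) : Prop :=
  ∃ (Z : A) (g : Y ⟶ Z), E.IsConflation f g

/-- A morphism is a deflation if it is the second map of some conflation. -/
def Deflation {Y Z : A} (g : Y ⟶ Z) : Prop :=
  ∃ (X : A) (f : X ⟶ Y), E.IsConflation f g

/-- Quillen's axioms for an exact category (in Bühler's formulation). -/
structure IsExactCategory : Prop where
  comp_zero : ∀ ⦃X Y Z : A⦄ ⦃f : X ⟶ Y⦄ ⦃g : Y ⟶ Z⦄, E.IsConflation f g → f ≫ g = 0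
  isKernel : ∀ ⦃X Y Z : A⦄ ⦃f : X ⟶ Y⦄ ⦃g : Y ⟶ Z⦄ (h : E.IsConflation f g),
    Nonempty (IsLimit (KernelFork.ofι f (comp_zero h)))
  isCokernel : ∀ ⦃X Y Z : A⦄ ⦃f : X ⟶ Y⦄ ⦃g : Y ⟶ Z⦄ (h : E.IsConflation f g),
    Nonempty (IsColimit (CokernelCofork.ofπ g (comp_zero h)))
  conflation_of_iso : ∀ ⦃X Y Z X' Y' Z' : A⦄ ⦃f : X ⟶ Y⦄ ⦃g : Y ⟶ Z⦄
    (eX : X ≅ X') (eY : Y ≅ Y') (eZ : Z ≅ Z') ⦃f' : X' ⟶ Y'⦄ ⦃g' : Y' ⟶ Z'⦄,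
    E.IsConflation f g → eX.hom ≫ f' = f ≫ eY.hom → eY.hom ≫ g' = g ≫ eZ.hom →
    E.IsConflation f' g'
  id_inflation : ∀ X : A, E.Inflation (𝟙 X)
  id_deflation : ∀ X : A, E.Deflation (𝟙 X)
  inflation_comp : ∀ ⦃X Y Z : A⦄ ⦃f : X ⟶ Y⦄ ⦃g : Y ⟶ Z⦄,
    E.Inflation f → E.Inflation g → E.Inflation (f ≫ g)
  deflation_comp : ∀ ⦃X Y Z : A⦄ ⦃f : X ⟶ Y⦄ ⦃g : Y ⟶ Z⦄,
    E.Deflation f → E.Deflation g → E.Deflation (f ≫ g)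
  inflation_pushout : ∀ ⦃X Y X' : A⦄ ⦃f : X ⟶ Y⦄ (u : X ⟶ X'), E.Inflation f →
    ∃ (Y' : A) (f' : X' ⟶ Y') (v : Y ⟶ Y'), E.Inflation f' ∧ IsPushout f u v f'
  deflation_pullback : ∀ ⦃Y Z Z' : A⦄ ⦃g : Y ⟶ Z⦄ (u : Z' ⟶ Z), E.Deflation g →
    ∃ (Y' : A) (g' : Y' ⟶ Z') (v : Y' ⟶ Y), E.Deflation g' ∧ IsPullback g' v u g

end ExactStruct

/-- An additive category is weakly idempotent complete if every split monomorphism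
has a cokernel. -/
def WIC (A : Type u) [Category.{v} A] [Preadditive A] : Prop :=
  ∀ ⦃X Y : A⦄ (f : X ⟶ Y), (∃ r : Y ⟶ X, f ≫ r = 𝟙 X) → HasCokernel f

namespace ExactStruct

variable (E : ExactStruct A)

/-- An object is projective (relative to the exact structure) if maps out of it lift
along deflations. -/
def ProjObj (P : A) : Prop :=
  ∀ ⦃Y Z : A⦄ ⦃g : Y ⟶ Z⦄, E.Deflation g → ∀ h : P ⟶ Z, ∃ l : P ⟶ Y, l ≫ g = h

/-- An object is injective (relative to the exact structure) if maps into it extend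
along inflations. -/
def InjObj (I : A) : Prop :=
  ∀ ⦃X Y : A⦄ ⦃f : X ⟶ Y⦄, E.Inflation f → ∀ h : X ⟶ I, ∃ l : Y ⟶ I, f ≫ l = h

/-- The exact category has enough projectives: every object admits a deflation from
a projective object. -/
def EnoughProjectives : Prop :=
  ∀ M : A, ∃ (K P : A) (f : K ⟶ P) (g : P ⟶ M), E.ProjObj P ∧ E.IsConflation f g

/-- The exact category has enough injectives. -/
def EnoughInjectives : Prop :=
  ∀ M : A, ∃ (I C : A) (f : M ⟶ I) (g : I ⟶ C), E.InjObj I ∧ E.IsConflation f g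

/-- `Ext¹(M, Y) = 0`: every conflation `Y ↣ Eo ↠ M` splits. -/
def Ext1Zero (M Y : A) : Prop :=
  ∀ ⦃Eo : A⦄ ⦃f : Y ⟶ Eo⦄ ⦃g : Eo ⟶ M⦄, E.IsConflation f g → ∃ s : M ⟶ Eo, s ≫ g = 𝟙 M

end ExactStruct

/-- `ExtZero E n M Y` means `Extⁿ(M, Y) = 0` (defined by dimension shifting along
projective presentations; the value at `n = 0` is irrelevant and set to `True`). -/
def ExtZero (E : ExactStruct A) : ℕ → A → A → Prop
  | 0, _, _ => True
  | 1, M, Y => E.Ext1Zero M Y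
  | (n + 2), M, Y => ∀ ⦃K P : A⦄ ⦃f : K ⟶ P⦄ ⦃g : P ⟶ M⦄,
      E.ProjObj P → E.IsConflation f g → ExtZero E (n + 1) K Y

namespace ExactStruct

variable (E : ExactStruct A)

/-- The right Ext-orthogonal of a class of objects. -/
def rightPerp (X : Set A) : Set A := {M | ∀ C ∈ X, E.Ext1Zero C M}

/-- The left Ext-orthogonal of a class of objects. -/
def leftPerp (Y : Set A) : Set A := {M | ∀ L ∈ Y, E.Ext1Zero M L}

end ExactStruct

/-- `SyzOf E X n K M` : `K` is an `n`-th syzygy of `M`, i.e. there is an acyclic sequence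
`K ↣ X_{n-1} → ⋯ → X_0 ↠ M` with all middle terms in `X`. -/
def SyzOf (E : ExactStruct A) (X : Set A) : ℕ → A → A → Prop
  | 0, K, M => Nonempty (K ≅ M)
  | (n + 1), K, M => ∃ (K' X0 : A) (f : K' ⟶ X0) (g : X0 ⟶ M),
      X0 ∈ X ∧ E.IsConflation f g ∧ SyzOf E X n K K'

/-- `CosyzOf E Y n C M` : `C` is an `n`-th cosyzygy of `M` with respect to `Y`. -/
def CosyzOf (E : ExactStruct A) (Y : Set A) : ℕ → A → A → Prop
  | 0, C, M => Nonempty (M ≅ C)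
  | (n + 1), C, M => ∃ (C' Y0 : A) (f : M ⟶ Y0) (g : Y0 ⟶ C'),
      Y0 ∈ Y ∧ E.IsConflation f g ∧ CosyzOf E Y n C C'

namespace ExactStruct

variable (E : ExactStruct A)

/-- There is an acyclic sequence `X_n ↣ X_{n-1} → ⋯ → X_0 ↠ M` with all `X_i ∈ X`. -/
def pdLE (X : Set A) (n : ℕ) (M : A) : Prop := ∃ K, K ∈ X ∧ SyzOf E X n K M

/-- The `X`-projective dimension of `M`, valued in `ℕ∞`. -/
noncomputable def pdim (X : Set A) (M : A) : ℕ∞ :=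
  sInf ((fun m : ℕ => (m : ℕ∞)) '' {m : ℕ | E.pdLE X m M})

/-- `X_n`: the class of objects of `X`-projective dimension at most `n`. -/
def pdSet (X : Set A) (n : ℕ) : Set A := {M | E.pdim X M ≤ (n : ℕ∞)}

/-- There is an acyclic sequence `M ↣ Y^0 → ⋯ → Y^{n-1} ↠ Y^n` with all `Y^i ∈ Y`. -/
def idLE (Y : Set A) (n : ℕ) (M : A) : Prop := ∃ C, C ∈ Y ∧ CosyzOf E Y n C M

/-- The `Y`-injective dimension of `M`, valued in `ℕ∞`. -/
noncomputable def idim (Y : Set A) (M : A) : ℕ∞ :=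
  sInf ((fun m : ℕ => (m : ℕ∞)) '' {m : ℕ | E.idLE Y m M})

/-- `Y_n`: the class of objects of `Y`-injective dimension at most `n`. -/
def idSet (Y : Set A) (n : ℕ) : Set A := {M | E.idim Y M ≤ (n : ℕ∞)}

/-- `(X, Y)` is a cotorsion pair. -/
def IsCotorsionPair (X Y : Set A) : Prop :=
  E.rightPerp X = Y ∧ E.leftPerp Y = X

/-- `(X, Y)` is a complete cotorsion pair. -/
def IsCompleteCP (X Y : Set A) : Prop :=
  E.IsCotorsionPair X Y ∧
  (∀ M : A, ∃ (Y' X' : A) (f : Y' ⟶ X') (g : X' ⟶ M),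
    Y' ∈ Y ∧ X' ∈ X ∧ E.IsConflation f g) ∧
  (∀ M : A, ∃ (Y'' X'' : A) (f : M ⟶ Y'') (g : Y'' ⟶ X''),
    Y'' ∈ Y ∧ X'' ∈ X ∧ E.IsConflation f g)

/-- Heredity conditions: `X` is closed under kernels of deflations and `Y` is closed
under cokernels of inflations. -/
def HereditaryClasses (X Y : Set A) : Prop :=
  (∀ ⦃K B C : A⦄ ⦃f : K ⟶ B⦄ ⦃g : B ⟶ C⦄,
    E.IsConflation f g → B ∈ X → C ∈ X → K ∈ X) ∧
  (∀ ⦃K B C : A⦄ ⦃f : K ⟶ B⦄ ⦃g : B ⟶ C⦄,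
    E.IsConflation f g → K ∈ Y → B ∈ Y → C ∈ Y)

/-- `W` is a thick class: closed under direct summands and two-out-of-three
in conflations. -/
def IsThick (W : Set A) : Prop :=
  (∀ ⦃M N : A⦄ (s : M ⟶ N) (r : N ⟶ M), s ≫ r = 𝟙 M → N ∈ W → M ∈ W) ∧
  (∀ ⦃X Y Z : A⦄ ⦃f : X ⟶ Y⦄ ⦃g : Y ⟶ Z⦄, E.IsConflation f g →
    ((X ∈ W → Y ∈ W → Z ∈ W) ∧ (X ∈ W → Z ∈ W → Y ∈ W) ∧ (Y ∈ W → Z ∈ W → X ∈ W)))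

/-- `(C, W, F)` is a Hovey triple. -/
def IsHoveyTriple (C W F : Set A) : Prop :=
  E.IsCompleteCP (C ∩ W) F ∧ E.IsCompleteCP C (W ∩ F) ∧ E.IsThick W

/-- `(C, W, F)` is a hereditary Hovey triple. -/
def IsHereditaryHoveyTriple (C W F : Set A) : Prop :=
  E.IsHoveyTriple C W F ∧ E.HereditaryClasses (C ∩ W) F ∧ E.HereditaryClasses C (W ∩ F)

/-- A complete cotorsion pair `(X, Y)` is left extendable if `(X_n, X_n^⊥)` is a
complete cotorsion pair for every `n ≥ 0`. -/
def LeftExtendable (X Y : Set A) : Prop :=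
  E.IsCompleteCP X Y ∧
  ∀ n : ℕ, E.IsCompleteCP (E.pdSet X n) (E.rightPerp (E.pdSet X n))

/-- A complete cotorsion pair `(X, Y)` is right extendable if `(⊥(Y_n), Y_n)` is a
complete cotorsion pair for every `n ≥ 0`. -/
def RightExtendable (X Y : Set A) : Prop :=
  E.IsCompleteCP X Y ∧
  ∀ n : ℕ, E.IsCompleteCP (E.leftPerp (E.idSet Y n)) (E.idSet Y n)

/-- The class `Y` is the right Ext-orthogonal of a set (i.e. small family) of objects. -/
def SetGenerated (Y : Set A) : Prop :=
  ∃ (ι : Type v) (G : ι → A), Y = {M | ∀ i, E.Ext1Zero (G i) M}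

/-- Trivial cofibrations of the exact model structure associated to a Hovey triple:
inflations with cokernel in `C ∩ W`. -/
def TrivCof (C W : Set A) : MorphismProperty A := fun X Y f =>
  ∃ (Z : A) (g : Y ⟶ Z), E.IsConflation f g ∧ Z ∈ C ∩ W

/-- Trivial fibrations: deflations with kernel in `W ∩ F`. -/
def TrivFib (W F : Set A) : MorphismProperty A := fun Y Z g =>
  ∃ (K : A) (f : K ⟶ Y), E.IsConflation f g ∧ K ∈ W ∩ F

/-- Weak equivalences of the exact model structure associated to a Hovey triple. -/
def WeakEquiv (C W F : Set A) : MorphismProperty A := fun X Y f =>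
  ∃ (Z : A) (i : X ⟶ Z) (p : Z ⟶ Y), E.TrivCof C W i ∧ E.TrivFib W F p ∧ i ≫ p = f

/-- The homotopy category of the exact model structure associated to the Hovey triple
`(C, W, F)`: the localization of `A` at the weak equivalences. -/
abbrev Ho (C W F : Set A) := (E.WeakEquiv C W F).Localization

end ExactStruct

/-- The full subcategory on a class of objects. -/
abbrev SubCat (S : Set A) := ObjectProperty.FullSubcategory (fun X : A => X ∈ S)

/-- The stable relation: two maps are identified if their difference factors through
an object of `P`. -/
def stableRel (S P : Set A) : HomRel (SubCat S) := fun X Y f g =>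
  ∃ (Q : A) (u : X.obj ⟶ Q) (v : Q ⟶ Y.obj),
    Q ∈ P ∧ (f.hom : X.obj ⟶ Y.obj) - (g.hom : X.obj ⟶ Y.obj) = u ≫ v

/-- The stable category of the full subcategory on `S`, modulo maps factoring through
objects of `P`. -/
abbrev StableCat (S P : Set A) := CategoryTheory.Quotient (stableRel S P)

namespace ExactStruct

variable (E : ExactStruct A)

/-- `P0` is a projective object of the full exact subcategory on `S`. -/
def SubProjObj (S : Set A) (P0 : A) : Prop :=
  P0 ∈ S ∧ ∀ ⦃X Y Z : A⦄ ⦃f : X ⟶ Y⦄ ⦃g : Y ⟶ Z⦄,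
    E.IsConflation f g → X ∈ S → Y ∈ S → Z ∈ S →
    ∀ h : P0 ⟶ Z, ∃ l : P0 ⟶ Y, l ≫ g = h

/-- `I0` is an injective object of the full exact subcategory on `S`. -/
def SubInjObj (S : Set A) (I0 : A) : Prop :=
  I0 ∈ S ∧ ∀ ⦃X Y Z : A⦄ ⦃f : X ⟶ Y⦄ ⦃g : Y ⟶ Z⦄,
    E.IsConflation f g → X ∈ S → Y ∈ S → Z ∈ S →
    ∀ h : X ⟶ I0, ∃ l : Y ⟶ I0, f ≫ l = h

/-- The full exact subcategory on `S` is a Frobenius category whose class of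
projective-injective objects is `P`. -/
def IsFrobeniusSub (S P : Set A) : Prop :=
  (∀ Q0 : A, E.SubProjObj S Q0 ↔ Q0 ∈ S ∩ P) ∧
  (∀ Q0 : A, E.SubInjObj S Q0 ↔ Q0 ∈ S ∩ P) ∧
  (∀ M ∈ S, ∃ (K Q0 : A) (f : K ⟶ Q0) (g : Q0 ⟶ M),
    K ∈ S ∧ Q0 ∈ P ∧ E.IsConflation f g) ∧
  (∀ M ∈ S, ∃ (Q0 C0 : A) (f : M ⟶ Q0) (g : Q0 ⟶ C0),
    C0 ∈ S ∧ Q0 ∈ P ∧ E.IsConflation f g)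

end ExactStruct

/-- The canonical exact structure of an abelian category: conflations are the short
exact sequences. -/
def abelianES (A : Type u) [Category.{v} A] [Abelian A] : ExactStruct A where
  IsConflation X Y Z f g :=
    ∃ w : f ≫ g = 0, Mono f ∧ Epi g ∧ (ShortComplex.mk f g w).Exact

/-- A recollement (at the level of plain categories) of `T₂` relative to `T₁` and `T₃`. -/
structure Recollement (T₁ : Type u₁) (T₂ : Type u₂) (T₃ : Type u₃)
    [Category.{v₁} T₁] [Category.{v₂} T₂] [Category.{v₃} T₃] where
  i : T₁ ⥤ T₂
  iStar : T₂ ⥤ T₁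
  iShriek : T₂ ⥤ T₁
  j : T₂ ⥤ T₃
  jShriek : T₃ ⥤ T₂
  jStar : T₃ ⥤ T₂
  adj₁ : iStar ⊣ i
  adj₂ : i ⊣ iShriek
  adj₃ : jShriek ⊣ j
  adj₄ : j ⊣ jStar
  i_ff : i.FullyFaithful
  jShriek_ff : jShriek.FullyFaithful
  jStar_ff : jStar.FullyFaithful
  ker : ∀ X : T₂, Limits.IsZero (j.obj X) ↔ ∃ Y : T₁, Nonempty (X ≅ i.obj Y)

section Presentable

/-- A preorder is `λ`-directed if every subset of cardinality `< λ` has an upper bound. -/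
def IsLamDirected (lam : Cardinal.{v}) (J : Type v) [Preorder J] : Prop :=
  ∀ s : Set J, Cardinal.mk s < lam → ∃ u : J, ∀ j ∈ s, j ≤ u

/-- An object `X` is `λ`-presentable if `Hom(X, −)` preserves `λ`-directed colimits. -/
def IsPresentableObj (lam : Cardinal.{v}) (X : A) : Prop :=
  ∀ (J : Type v) [Preorder J], IsLamDirected lam J →
    ∀ (D : J ⥤ A) (c : Cocone D), IsColimit c →
      (∀ f : X ⟶ c.pt, ∃ (j : J) (g : X ⟶ D.obj j), g ≫ c.ι.app j = f) ∧
      (∀ (j j' : J) (g : X ⟶ D.obj j) (g' : X ⟶ D.obj j'),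
        g ≫ c.ι.app j = g' ≫ c.ι.app j' →
        ∃ (l : J) (hj : j ≤ l) (hj' : j' ≤ l),
          g ≫ D.map (homOfLE hj) = g' ≫ D.map (homOfLE hj'))

/-- `X` is a `λ`-directed colimit of objects isomorphic to members of the family `G`. -/
def IsLamDirColimitOf (lam : Cardinal.{v}) {ι : Type v} (G : ι → A) (X : A)
    (J : Type v) [Preorder J] : Prop :=
  IsLamDirected lam J ∧
  ∃ (D : J ⥤ A) (c : Cocone D), Nonempty (IsColimit c) ∧ Nonempty (c.pt ≅ X) ∧
    ∀ j : J, ∃ i : ι, Nonempty (D.obj j ≅ G i)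

/-- The category `A` is `λ`-accessible. -/
def IsAccessibleCat (A : Type u) [Category.{v} A] (lam : Cardinal.{v}) : Prop :=
  Cardinal.IsRegular lam ∧
  ∃ (ι : Type v) (G : ι → A),
    (∀ i, IsPresentableObj lam (G i)) ∧
    ∀ X : A, ∃ (J : Type v) (instJ : Preorder J),
      @IsLamDirColimitOf A _ lam ι G X J instJ

/-- The category `A` is locally presentable: cocomplete and accessible. -/
def IsLocallyPresentableCat (A : Type u) [Category.{v} A] : Prop :=
  HasColimitsOfSize.{v, v} A ∧ ∃ lam : Cardinal.{v}, IsAccessibleCat A lam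

end Presentable

end CotorsionPaper

namespace CotorsionPaper

variable {A : Type u} [Category.{v} A] [Preadditive A] {E : ExactStruct A}

namespace ExactStruct.IsExactCategory

variable (hE : E.IsExactCategory)
include hE

theorem mono {X Y Z : A} {f : X ⟶ Y} {g : Y ⟶ Z} (h : E.IsConflation f g) : Mono f := by
  obtain ⟨hl⟩ := hE.isKernel h
  exact ⟨fun u v huv => Fork.IsLimit.hom_ext hl (by simpa using huv)⟩

theorem epi {X Y Z : A} {f : X ⟶ Y} {g : Y ⟶ Z} (h : E.IsConflation f g) : Epi g := by
  obtain ⟨hl⟩ := hE.isCokernel h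
  exact ⟨fun u v huv => Cofork.IsColimit.hom_ext hl (by simpa using huv)⟩

theorem exists_lift {X Y Z T : A} {f : X ⟶ Y} {g : Y ⟶ Z} (h : E.IsConflation f g)
    (t : T ⟶ Y) (ht : t ≫ g = 0) : ∃ u : T ⟶ X, u ≫ f = t := by
  obtain ⟨hl⟩ := hE.isKernel h
  obtain ⟨u, hu⟩ := KernelFork.IsLimit.lift' hl t ht
  exact ⟨u, hu⟩

theorem exists_desc {X Y Z T : A} {f : X ⟶ Y} {g : Y ⟶ Z} (h : E.IsConflation f g)
    (t : Y ⟶ T) (ht : f ≫ t = 0) : ∃ u : Z ⟶ T, g ≫ u = t := by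
  obtain ⟨hl⟩ := hE.isCokernel h
  obtain ⟨u, hu⟩ := CokernelCofork.IsColimit.desc' hl t ht
  exact ⟨u, hu⟩

theorem exists_retraction {X Y Z : A} {f : X ⟶ Y} {g : Y ⟶ Z} (h : E.IsConflation f g)
    {s : Z ⟶ Y} (hs : s ≫ g = 𝟙 Z) : ∃ r : Y ⟶ X, f ≫ r = 𝟙 X := by
  obtain ⟨r, hr⟩ := hE.exists_lift h (𝟙 Y - g ≫ s) (by simp [hs])
  refine ⟨r, (hE.mono h).right_cancellation _ _ ?_⟩
  simp [hr, reassoc_of% hE.comp_zero h]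

theorem exists_section {X Y Z : A} {f : X ⟶ Y} {g : Y ⟶ Z} (h : E.IsConflation f g)
    {r : Y ⟶ X} (hr : f ≫ r = 𝟙 X) : ∃ s : Z ⟶ Y, s ≫ g = 𝟙 Z := by
  obtain ⟨s, hs⟩ := hE.exists_desc h (𝟙 Y - r ≫ f) (by simp [reassoc_of% hr])
  refine ⟨s, (hE.epi h).left_cancellation _ _ ?_⟩
  simp [reassoc_of% hs, hE.comp_zero h]

theorem exists_retraction_of_projObj {X Y Z : A} {f : X ⟶ Y} {g : Y ⟶ Z}
    (h : E.IsConflation f g) (hZ : E.ProjObj Z) : ∃ r : Y ⟶ X, f ≫ r = 𝟙 X := by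
  obtain ⟨s, hs⟩ := hZ ⟨X, f, h⟩ (𝟙 Z)
  exact hE.exists_retraction h hs

theorem conflation_of_isKernel {X X' Y Z : A} {f : X ⟶ Y} {g : Y ⟶ Z}
    (h : E.IsConflation f g) {k : X' ⟶ Y} (hk : k ≫ g = 0) [Mono k]
    (hfac : ∀ ⦃T : A⦄ (t : T ⟶ Y), t ≫ g = 0 → ∃ u : T ⟶ X', u ≫ k = t) :
    E.IsConflation k g := by
  have := hE.mono h
  obtain ⟨u, hu⟩ := hfac f (hE.comp_zero h)
  obtain ⟨u', hu'⟩ := hE.exists_lift h k hk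
  let e : X' ≅ X :=
    { hom := u'
      inv := u
      hom_inv_id := by simp [← cancel_mono k, hu, hu']
      inv_hom_id := by simp [← cancel_mono f, hu, hu'] }
  exact hE.conflation_of_iso e.symm (Iso.refl Y) (Iso.refl Z) h (by simp [e, hu]) (by simp)

theorem conflation_of_isCokernel {X Y Z Z' : A} {f : X ⟶ Y} {g : Y ⟶ Z}
    (h : E.IsConflation f g) {q : Y ⟶ Z'} (hq : f ≫ q = 0) [Epi q]
    (hfac : ∀ ⦃T : A⦄ (t : Y ⟶ T), f ≫ t = 0 → ∃ u : Z' ⟶ T, q ≫ u = t) :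
    E.IsConflation f q := by
  have := hE.epi h
  obtain ⟨u, hu⟩ := hfac g (hE.comp_zero h)
  obtain ⟨u', hu'⟩ := hE.exists_desc h q hq
  let e : Z ≅ Z' :=
    { hom := u'
      inv := u
      hom_inv_id := by rw [← cancel_epi g, ← Category.assoc, hu', hu, Category.comp_id]
      inv_hom_id := by rw [← cancel_epi q, ← Category.assoc, hu, hu', Category.comp_id] }
  exact hE.conflation_of_iso (Iso.refl X) (Iso.refl Y) e h (by simp) (by simp [e, hu'])

theorem deflation_of_isPullback {Y Z Y' Z' : A} {g : Y ⟶ Z} {g' : Y' ⟶ Z'} {v : Y' ⟶ Y}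
    {u : Z' ⟶ Z} (hg : E.Deflation g) (hpb : IsPullback g' v u g) : E.Deflation g' := by
  obtain ⟨Y₀, g₀, v₀, ⟨K, k, hk⟩, hpb₀⟩ := hE.deflation_pullback u hg
  let e := hpb.isoIsPullback _ _ hpb₀
  exact ⟨K, k ≫ e.inv, hE.conflation_of_iso (Iso.refl K) e.symm (Iso.refl Z') hk (by simp)
    (by simp [e])⟩

theorem exists_conflation_of_isPullback {K B M P D : A} {f : K ⟶ B} {g : B ⟶ M}
    (h : E.IsConflation f g) {u : P ⟶ M} {d₁ : D ⟶ P} {d₂ : D ⟶ B}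
    (hpb : IsPullback d₁ d₂ u g) (hd : E.Deflation d₁) :
    ∃ k : K ⟶ D, k ≫ d₂ = f ∧ E.IsConflation k d₁ := by
  obtain ⟨K₀, f₀, hc₀⟩ := hd
  have := hE.mono h
  let k := hpb.lift 0 f (by simp [hE.comp_zero h])
  have hk₁ : k ≫ d₁ = 0 := hpb.lift_fst _ _ _
  have hk₂ : k ≫ d₂ = f := hpb.lift_snd _ _ _
  have : Mono k := mono_of_mono_fac hk₂
  refine ⟨k, hk₂, hE.conflation_of_isKernel hc₀ hk₁ fun T t ht => ?_⟩
  obtain ⟨w, hw⟩ := hE.exists_lift h (t ≫ d₂) (by simp [← hpb.w, reassoc_of% ht])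
  exact ⟨w, hpb.hom_ext (by simp [hk₁, ht]) (by simp [hk₂, hw])⟩

theorem exists_conflation_of_isPushout {X Y Z X' Y' : A} {f : X ⟶ Y} {g : Y ⟶ Z}
    (h : E.IsConflation f g) {u : X ⟶ X'} {v : Y ⟶ Y'} {f' : X' ⟶ Y'}
    (hpo : IsPushout f u v f') (hf' : E.Inflation f') :
    ∃ q : Y' ⟶ Z, v ≫ q = g ∧ E.IsConflation f' q := by
  obtain ⟨Z₀, q₀, hc₀⟩ := hf'
  have := hE.epi h
  let q := hpo.desc g 0 (by simp [hE.comp_zero h])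
  have hq₁ : v ≫ q = g := hpo.inl_desc _ _ _
  have hq₂ : f' ≫ q = 0 := hpo.inr_desc _ _ _
  have : Epi q := epi_of_epi_fac hq₁
  refine ⟨q, hq₁, hE.conflation_of_isCokernel hc₀ hq₂ fun T t ht => ?_⟩
  obtain ⟨w, hw⟩ := hE.exists_desc h (v ≫ t) (by simp [reassoc_of% hpo.w, ht])
  exact ⟨w, hpo.hom_ext (by simp [reassoc_of% hq₁, hw]) (by simp [reassoc_of% hq₂, ht])⟩

theorem exists_pullback_conflations {K B M L P : A} {f : K ⟶ B} {g : B ⟶ M}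
    {f' : L ⟶ P} {g' : P ⟶ M} (h : E.IsConflation f g) (h' : E.IsConflation f' g') :
    ∃ (D : A) (d₁ : D ⟶ P) (d₂ : D ⟶ B) (k : K ⟶ D) (l : L ⟶ D),
      E.IsConflation k d₁ ∧ E.IsConflation l d₂ ∧ k ≫ d₂ = f ∧ l ≫ d₁ = f' := by
  obtain ⟨D, d₁, d₂, hd₁, hpb⟩ := hE.deflation_pullback g' ⟨K, f, h⟩
  have hd₂ := hE.deflation_of_isPullback ⟨L, f', h'⟩ hpb.flip
  obtain ⟨k, hk, hck⟩ := hE.exists_conflation_of_isPullback h hpb hd₁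
  obtain ⟨l, hl, hcl⟩ := hE.exists_conflation_of_isPullback h' hpb.flip hd₂
  exact ⟨D, d₁, d₂, k, l, hck, hcl, hk, hl⟩

/-- Noether isomorphism `V / Y ≅ A'`, for `V` the kernel of `W ↠ D ↠ C`. -/
theorem exists_conflations_of_deflation_comp {Y W D A' C : A} {a : Y ⟶ W} {b : W ⟶ D}
    {i : A' ⟶ D} {p : D ⟶ C} (h₁ : E.IsConflation a b) (h₂ : E.IsConflation i p) :
    ∃ (V : A) (w : V ⟶ W) (a₁ : Y ⟶ V) (p₁ : V ⟶ A'),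
      E.IsConflation w (b ≫ p) ∧ E.IsConflation a₁ p₁ ∧ a₁ ≫ w = a := by
  obtain ⟨V, p₁, w, hp₁, hpb⟩ := hE.deflation_pullback i ⟨Y, a, h₁⟩
  obtain ⟨a₁, ha₁, hc₁⟩ := hE.exists_conflation_of_isPullback h₁ hpb hp₁
  obtain ⟨V', w', hc'⟩ := hE.deflation_comp ⟨Y, a, h₁⟩ ⟨A', i, h₂⟩
  have := hE.mono h₂
  have := hpb.mono_snd_of_mono
  refine ⟨V, w, a₁, p₁, hE.conflation_of_isKernel hc' ?_ fun T t ht => ?_, hc₁, ha₁⟩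
  · simp [← reassoc_of% hpb.w, hE.comp_zero h₂]
  · obtain ⟨s, hs⟩ := hE.exists_lift h₂ (t ≫ b) (by simpa using ht)
    exact ⟨hpb.lift s t hs, hpb.lift_snd _ _ _⟩

end ExactStruct.IsExactCategory

namespace ExactStruct

theorem ProjObj.of_retract {P₀ P : A} {i : P₀ ⟶ P} {r : P ⟶ P₀} (hir : i ≫ r = 𝟙 P₀)
    (hP : E.ProjObj P) : E.ProjObj P₀ := by
  intro Y Z g hg h
  obtain ⟨l, hl⟩ := hP hg (r ≫ h)
  exact ⟨i ≫ l, by simp [hl, reassoc_of% hir]⟩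

theorem Ext1Zero.of_projObj {P Y : A} (hP : E.ProjObj P) : E.Ext1Zero P Y :=
  fun _ f _ hc => hP ⟨Y, f, hc⟩ (𝟙 P)

theorem Ext1Zero.of_retract (hE : E.IsExactCategory) {K D Y : A} {i : K ⟶ D} {r : D ⟶ K}
    (hir : i ≫ r = 𝟙 K) (h : E.Ext1Zero D Y) : E.Ext1Zero K Y := by
  intro W α β hc
  obtain ⟨W', β', v, hβ', hpb⟩ := hE.deflation_pullback r ⟨Y, α, hc⟩
  obtain ⟨α', -, hc'⟩ := hE.exists_conflation_of_isPullback hc hpb hβ'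
  obtain ⟨t, ht⟩ := h hc'
  exact ⟨i ≫ t ≫ v, by simp [← hpb.w, reassoc_of% ht, hir]⟩

theorem Ext1Zero.of_iso (hE : E.IsExactCategory) {K K' Y : A} (e : K ≅ K')
    (h : E.Ext1Zero K Y) : E.Ext1Zero K' Y :=
  h.of_retract hE e.inv_hom_id

/-- To split `Y ↣ W ↠ D`, first split its pullback `Y ↣ V ↠ A₀` using `Ext¹(A₀, Y) = 0`; the
pushout along the resulting retraction `V → Y` is a conflation `Y ↣ U ↠ C`, whose splitting
gives a retraction of `Y ↣ W`. -/
theorem Ext1Zero.of_conflation (hE : E.IsExactCategory) {A₀ D C Y : A} {i : A₀ ⟶ D}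
    {p : D ⟶ C} (hc : E.IsConflation i p) (hA : E.Ext1Zero A₀ Y) (hC : E.Ext1Zero C Y) :
    E.Ext1Zero D Y := by
  intro W α β hcW
  obtain ⟨V, w, a₁, p₁, hcV, hcA, ha₁⟩ := hE.exists_conflations_of_deflation_comp hcW hc
  obtain ⟨σ, hσ⟩ := hA hcA
  obtain ⟨ρ, hρ⟩ := hE.exists_retraction hcA hσ
  obtain ⟨U, w', v, hw', hpo⟩ := hE.inflation_pushout ρ ⟨_, _, hcV⟩
  obtain ⟨q, -, hcU⟩ := hE.exists_conflation_of_isPushout hcV hpo hw'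
  obtain ⟨τ, hτ⟩ := hC hcU
  obtain ⟨ρU, hρU⟩ := hE.exists_retraction hcU hτ
  refine hE.exists_section hcW (r := v ≫ ρU) ?_
  rw [← ha₁, Category.assoc, reassoc_of% hpo.w, reassoc_of% hρ, hρU]

end ExactStruct

def HigherExtZero (E : ExactStruct A) (B Y : A) : Prop := ∀ j : ℕ, ExtZero E (j + 1) B Y

theorem ExtZero.of_iso (hE : E.IsExactCategory) {K M Y : A} (e : K ≅ M) :
    ∀ {n : ℕ}, ExtZero E n K Y → ExtZero E n M Y
  | 0, _ => trivial
  | 1, h => ExactStruct.Ext1Zero.of_iso hE e h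
  | _ + 2, h => fun _ _ f g hP hc =>
      h hP (hE.conflation_of_iso (Iso.refl _) (Iso.refl _) e.symm hc (f' := f) (g' := g ≫ e.inv)
        (by simp) (by simp))

theorem HigherExtZero.of_projObj (hE : E.IsExactCategory) {P Y : A} (hP : E.ProjObj P) :
    HigherExtZero E P Y := by
  intro j
  induction j generalizing P with
  | zero => exact ExactStruct.Ext1Zero.of_projObj hP
  | succ j ih =>
    intro K Q f g hQ hc
    obtain ⟨r, hr⟩ := hE.exists_retraction_of_projObj hc hP
    exact ih (ExactStruct.ProjObj.of_retract hr hQ)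

theorem HigherExtZero.syzygy {K P B Y : A} {f : K ⟶ P} {g : P ⟶ B} (hB : HigherExtZero E B Y)
    (hP : E.ProjObj P) (hc : E.IsConflation f g) : HigherExtZero E K Y :=
  fun j => hB (j + 1) hP hc

section DimensionShifting

variable (hE : E.IsExactCategory) (hproj : E.EnoughProjectives) {Y : A}
include hE hproj

omit hE in
theorem extZero_add_two_iff {M : A} {j : ℕ} {q : Prop}
    (h : ∀ ⦃K P : A⦄ ⦃f : K ⟶ P⦄ ⦃g : P ⟶ M⦄, E.ProjObj P → E.IsConflation f g →
      (ExtZero E (j + 1) K Y ↔ q)) :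
    ExtZero E (j + 2) M Y ↔ q := by
  obtain ⟨K, P, f, g, hP, hc⟩ := hproj M
  exact ⟨fun hM => (h hP hc).mp (hM hP hc), fun hq _ _ _ _ hP' hc' => (h hP' hc').mpr hq⟩

/-- Dimension shifting at level `j` only needs the invariance `hinv` at level `j`; this lets
`extZero_iff_of_conflation` and `extZero_iff_extZero_add_two` be proved by a joint induction. -/
theorem extZero_iff_extZero_add_two_of_invariance (j : ℕ)
    (hinv : ∀ ⦃L D B : A⦄ ⦃l : L ⟶ D⦄ ⦃δ : D ⟶ B⦄, E.IsConflation l δ →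
      HigherExtZero E B Y → (ExtZero E (j + 1) D Y ↔ ExtZero E (j + 1) L Y))
    {K B M : A} {f : K ⟶ B} {g : B ⟶ M} (hc : E.IsConflation f g)
    (hB : HigherExtZero E B Y) :
    ExtZero E (j + 1) K Y ↔ ExtZero E (j + 2) M Y := by
  refine (extZero_add_two_iff hproj fun L P f' g' hP hc' => ?_).symm
  obtain ⟨D, _, _, k, l, hck, hcl, -, -⟩ := hE.exists_pullback_conflations hc hc'
  exact (hinv hcl hB).symm.trans (hinv hck (.of_projObj hE hP))

theorem extZero_iff_of_conflation {L D B : A} {l : L ⟶ D} {δ : D ⟶ B}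
    (hc : E.IsConflation l δ) (hB : HigherExtZero E B Y) (j : ℕ) :
    ExtZero E (j + 1) D Y ↔ ExtZero E (j + 1) L Y := by
  induction j generalizing L D B with
  | zero =>
    refine ⟨fun hD => ?_, fun hL => ExactStruct.Ext1Zero.of_conflation hE hc hL (hB 0)⟩
    obtain ⟨B₁, P, b, π, hP, hcP⟩ := hproj B
    obtain ⟨G, _, _, k, l, hck, hcl, -, -⟩ := hE.exists_pullback_conflations hc hcP
    obtain ⟨r, hr⟩ := hE.exists_retraction_of_projObj hck hP
    exact .of_retract hE hr (.of_conflation hE hcl (hB 1 hP hcP) hD)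
  | succ j ih =>
    refine extZero_add_two_iff hproj fun D₁ Q q₁ q₂ hQ hcq => ?_
    obtain ⟨V, w, a₁, p₁, hcV, hcA, -⟩ := hE.exists_conflations_of_deflation_comp hcq hc
    exact extZero_iff_extZero_add_two_of_invariance hE hproj j (fun _ _ _ _ _ => ih) hcA
      (hB.syzygy hQ hcV)

theorem extZero_iff_extZero_add_two {K B M : A} {f : K ⟶ B} {g : B ⟶ M}
    (hc : E.IsConflation f g) (hB : HigherExtZero E B Y) (j : ℕ) :
    ExtZero E (j + 1) K Y ↔ ExtZero E (j + 2) M Y :=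
  extZero_iff_extZero_add_two_of_invariance hE hproj j
    (fun _ _ _ _ _ hc' hB' => extZero_iff_of_conflation hE hproj hc' hB' j) hc hB

theorem extZero_iff_of_syzOf {X : Set A} (hX : ∀ B ∈ X, HigherExtZero E B Y) {n : ℕ}
    {K M : A} (hsyz : SyzOf E X n K M) (j : ℕ) :
    ExtZero E (j + 1) K Y ↔ ExtZero E (n + j + 1) M Y := by
  induction n generalizing K M with
  | zero =>
    obtain ⟨e⟩ := hsyz
    rw [Nat.zero_add]
    exact ⟨ExtZero.of_iso hE e, ExtZero.of_iso hE e.symm⟩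
  | succ n ih =>
    obtain ⟨K₁, X₀, f, g, hX₀, hc, hsyz⟩ := hsyz
    rw [ih hsyz, show n + 1 + j + 1 = n + j + 2 by omega]
    exact extZero_iff_extZero_add_two hE hproj hc (hX X₀ hX₀) (n + j)

end DimensionShifting

theorem higherExtZero_of_mem {X : Set A}
    (hher : ∀ ⦃K B C : A⦄ ⦃f : K ⟶ B⦄ ⦃g : B ⟶ C⦄, E.IsConflation f g → B ∈ X → C ∈ X → K ∈ X)
    (hprojX : ∀ ⦃P : A⦄, E.ProjObj P → P ∈ X) {Y : A} (hY : Y ∈ E.rightPerp X)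
    {B : A} (hB : B ∈ X) : HigherExtZero E B Y := by
  intro j
  induction j generalizing B with
  | zero => exact hY B hB
  | succ j ih => exact fun K P f g hP hc => ih (hher hc (hprojX hP) hB)

theorem exists_syzOf {X : Set A}
    (happrox : ∀ M : A, ∃ (K B : A) (f : K ⟶ B) (g : B ⟶ M), B ∈ X ∧ E.IsConflation f g)
    (n : ℕ) (M : A) : ∃ K, SyzOf E X n K M := by
  induction n generalizing M with
  | zero => exact ⟨M, ⟨Iso.refl M⟩⟩
  | succ n ih =>
    obtain ⟨K₁, B, f, g, hB, hc⟩ := happrox M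
    obtain ⟨K, hK⟩ := ih K₁
    exact ⟨K, K₁, B, f, g, hB, hc, hK⟩

theorem ExactStruct.pdim_le_iff {X : Set A} {M : A} {n : ℕ} :
    E.pdim X M ≤ n ↔ ∃ m ≤ n, E.pdLE X m M := by
  constructor
  · intro h
    obtain ⟨m, hm, hpd⟩ : E.pdim X M ∈ (fun m : ℕ => (m : ℕ∞)) '' {m | E.pdLE X m M} := by
      refine csInf_mem (Set.nonempty_iff_ne_empty.mpr fun hempty => ?_)
      simp [pdim, hempty] at h
    rw [← hpd] at h
    exact ⟨m, ENat.natCast_le_natCast.mp h, hm⟩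
  · rintro ⟨m, hmn, hm⟩
    calc E.pdim X M ≤ m := sInf_le ⟨m, hm, rfl⟩
      _ ≤ n := by exact_mod_cast hmn

theorem statement0_general {A : Type u} [Category.{v} A] [Preadditive A]
    (E : ExactStruct A) (hE : E.IsExactCategory)
    (hproj : E.EnoughProjectives)
    (X : Set A)
    (hcomp : E.IsCompleteCP X (E.rightPerp X))
    (hher : E.HereditaryClasses X (E.rightPerp X))
    (M : A) (n : ℕ) :
    List.TFAE
      [E.pdim X M ≤ (n : ℕ∞),
       E.pdLE X n M,
       ∀ K : A, SyzOf E X n K M → K ∈ X,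
       ∀ Y ∈ E.rightPerp X, ∀ i : ℕ, 1 ≤ i → ExtZero E (n + i) M Y] := by
  have hX : E.leftPerp (E.rightPerp X) = X := hcomp.1.2
  have hprojX : ∀ ⦃P : A⦄, E.ProjObj P → P ∈ X :=
    fun P hP => hX ▸ fun L _ => ExactStruct.Ext1Zero.of_projObj hP
  have hhigher : ∀ Y ∈ E.rightPerp X, ∀ B ∈ X, HigherExtZero E B Y :=
    fun Y hY B hB => higherExtZero_of_mem hher.1 hprojX hY hB
  tfae_have 1 → 4
  | h, Y, hY, i, hi => by
    obtain ⟨m, hmn, K, hK, hsyz⟩ := ExactStruct.pdim_le_iff.mp h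
    rw [show n + i = m + (n - m + i - 1) + 1 by omega]
    exact (extZero_iff_of_syzOf hE hproj (hhigher Y hY) hsyz _).mp (hhigher Y hY K hK _)
  tfae_have 4 → 3
  | h, K, hsyz => hX ▸ fun L hL =>
    (extZero_iff_of_syzOf hE hproj (hhigher L hL) hsyz 0).mpr (h L hL 1 le_rfl)
  tfae_have 3 → 2
  | h => by
    obtain ⟨K, hsyz⟩ := exists_syzOf (fun M => by
      obtain ⟨K, B, f, g, -, hB, hc⟩ := hcomp.2.1 M
      exact ⟨K, B, f, g, hB, hc⟩) n M
    exact ⟨K, h K hsyz, hsyz⟩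
  tfae_have 2 → 1
  | h => ExactStruct.pdim_le_iff.mpr ⟨n, le_rfl, h⟩
  tfae_finish

/-- Characterizations of objects of `X`-projective dimension at most `n`
for a complete hereditary cotorsion pair `(X, X^⊥)` in a WIC exact category with enough
projectives and injectives. -/
theorem statement0 {A : Type u} [Category.{v} A] [Preadditive A]
    (E : ExactStruct A) (hE : E.IsExactCategory) (hwic : WIC A)
    (hproj : E.EnoughProjectives) (hinj : E.EnoughInjectives)
    (X : Set A)
    (hcomp : E.IsCompleteCP X (E.rightPerp X))
    (hher : E.HereditaryClasses X (E.rightPerp X))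
    (M : A) (n : ℕ) :
    List.TFAE
      [E.pdim X M ≤ (n : ℕ∞),
       E.pdLE X n M,
       ∀ K : A, SyzOf E X n K M → K ∈ X,
       ∀ Y ∈ E.rightPerp X, ∀ i : ℕ, 1 ≤ i → ExtZero E (n + i) M Y] :=
  statement0_general E hE hproj X hcomp hher M n

end CotorsionPaper
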